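/- arXiv:1303.6982 — 3 statements merged into one kernel-verified Lean document; each statement's English description precedes it below -/
import Mathlib

section
/- Let Y be a nonempty subset of a topological vector space E and let K be an (n−1)-dimensional simplex in a Hausdorff topological vector space F. If T : K → 2^Y is a weakly naturally quasi-concave correspondence, then T admits a continuous selection on K, i.e. there exists a continuous function f : K → Y such that f(x) ∈ T(x) for every x ∈ K. -/
/-!
The map `λ ↦ ∑ λᵢ aᵢ` is a continuous bijection from the compact standard simplex onto the
Hausdorff space `K`, hence a homeomorphism; so the barycentric coordinates `λᵢ(x)` depend
continuously on `x ∈ K`. The WNQ property, applied to the vertices `a₁, …, aₙ`, then makes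
`x ↦ ∑ gᵢ(λᵢ(x)) yᵢ` a continuous selection of `T`.
-/

/-- A correspondence `T : X → 2^Y` is *weakly naturally quasi-concave* (WNQ) if for each `n`
and each finite family `x_1, ..., x_n` in `X` there exist `y_i ∈ T(x_i)` and a map
`g = (g_1, ..., g_n) : Δ_{n-1} → Δ_{n-1}` with each `g_i` continuous, `g_i 1 = 1`, `g_i 0 = 0`,
such that for every `(λ_1, ..., λ_n) ∈ Δ_{n-1}` one has
`∑ i, g_i (λ_i) • y_i ∈ T (∑ i, λ_i • x_i)`. -/
def IsWNQ {E F : Type*} [AddCommMonoid E] [Module ℝ E]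
    [AddCommMonoid F] [Module ℝ F] (X : Set E) (T : E → Set F) : Prop :=
  ∀ (n : ℕ) (x : Fin n → E), (∀ i, x i ∈ X) →
    ∃ (y : Fin n → F) (g : Fin n → ℝ → ℝ),
      (∀ i, y i ∈ T (x i)) ∧
      (∀ i, Continuous (g i)) ∧
      (∀ i, g i 1 = 1) ∧
      (∀ i, g i 0 = 0) ∧
      ∀ lam ∈ stdSimplex ℝ (Fin n),
        (fun i => g i (lam i)) ∈ stdSimplex ℝ (Fin n) ∧
        ∑ i, g i (lam i) • y i ∈ T (∑ i, lam i • x i)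

open Set

theorem image_linearCombination_stdSimplex {ι F : Type*} [Fintype ι] [AddCommGroup F]
    [Module ℝ F] (a : ι → F) :
    Fintype.linearCombination ℝ a '' stdSimplex ℝ ι = convexHull ℝ (range a) := by
  classical
  rw [← convexHull_rangle_single_eq_stdSimplex, LinearMap.image_convexHull, ← range_comp]
  congr 2
  ext i
  simp [Fintype.linearCombination_apply_single]

theorem Continuous.continuousOn_extend_subtype_val {X Y : Type*} [TopologicalSpace X] [TopologicalSpace Y]
    {s : Set X} {f : s → Y} (hf : Continuous f) (g : X → Y) :
    ContinuousOn (Function.extend Subtype.val f g) s := by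
  rw [continuousOn_iff_continuous_domRestrict]
  convert hf
  ext x
  exact Subtype.val_injective.extend_apply f g x

namespace AffineIndependent

variable {ι F : Type*} [Fintype ι] [AddCommGroup F] [Module ℝ F] {a : ι → F}

theorem bijOn_linearCombination_stdSimplex (ha : AffineIndependent ℝ a) :
    BijOn (Fintype.linearCombination ℝ a) (stdSimplex ℝ ι) (convexHull ℝ (range a)) := by
  refine image_linearCombination_stdSimplex a ▸ InjOn.bijOn_image fun w hw v hv hwv => ?_
  simp only [Fintype.linearCombination_apply] at hwv
  rw [← Finset.univ.affineCombination_eq_linear_combination a w hw.2,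
    ← Finset.univ.affineCombination_eq_linear_combination a v hv.2] at hwv
  exact (affineIndependent_iff_eq_of_fintype_affineCombination_eq ℝ a).mp ha w v hw.2 hv.2 hwv

variable [TopologicalSpace F] [IsTopologicalAddGroup F] [ContinuousSMul ℝ F] [T2Space F]

noncomputable def stdSimplexHomeomorph (ha : AffineIndependent ℝ a) :
    stdSimplex ℝ ι ≃ₜ convexHull ℝ (range a) :=
  Continuous.homeoOfEquivCompactToT2 (f := ha.bijOn_linearCombination_stdSimplex.equiv _)
    ((LinearMap.continuous_on_pi _).restrict ha.bijOn_linearCombination_stdSimplex.mapsTo)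

theorem coe_stdSimplexHomeomorph_apply (ha : AffineIndependent ℝ a) (w : stdSimplex ℝ ι) :
    (ha.stdSimplexHomeomorph w : F) = ∑ i, w.1 i • a i :=
  Fintype.linearCombination_apply ℝ a w

end AffineIndependent

theorem selection_theorem_of_WNQ_general
    {E F : Type*}
    [AddCommGroup E] [Module ℝ E] [TopologicalSpace E]
    [IsTopologicalAddGroup E] [ContinuousSMul ℝ E]
    [AddCommGroup F] [Module ℝ F] [TopologicalSpace F]
    [IsTopologicalAddGroup F] [ContinuousSMul ℝ F] [T2Space F]
    (n : ℕ) (a : Fin n → F) (ha : AffineIndependent ℝ a)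
    (K : Set F) (hK : K = convexHull ℝ (Set.range a))
    (T : F → Set E)
    (hT : IsWNQ K T) :
    ∃ f : F → E, ContinuousOn f K ∧ ∀ x ∈ K, f x ∈ T x := by
  subst hK
  obtain ⟨y, g, -, hg, -, -, hgT⟩ := hT n a fun i => subset_convexHull ℝ _ ⟨i, rfl⟩
  let bary := ha.stdSimplexHomeomorph.symm
  let σ : convexHull ℝ (range a) → E := fun x => ∑ i, g i ((bary x).1 i) • y i
  have hσ : Continuous σ := by
    have hbary : Continuous fun x => (bary x).1 := bary.continuous.subtype_val
    exact continuous_finsetSum _ fun i _ =>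
      ((hg i).comp ((continuous_apply i).comp hbary)).smul continuous_const
  have hσT : ∀ x : convexHull ℝ (range a), σ x ∈ T x := fun x => by
    have hx := (hgT _ (bary x).2).2
    rwa [← ha.coe_stdSimplexHomeomorph_apply, Homeomorph.apply_symm_apply] at hx
  refine ⟨Function.extend Subtype.val σ 0, hσ.continuousOn_extend_subtype_val 0, fun x hx => ?_⟩
  rw [Subtype.val_injective.extend_apply σ 0 ⟨x, hx⟩]
  exact hσT ⟨x, hx⟩

/-- **Selection theorem.** Let `Y` be a nonempty subset of a topological vector space `E` and
`K` an `(n-1)`-dimensional simplex (the convex hull of `n` affinely independent points) in a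
Hausdorff topological vector space `F`. If `T : K → 2^Y` is a weakly naturally quasi-concave
correspondence, then `T` has a continuous selection on `K`. -/
theorem selection_theorem_of_WNQ
    {E F : Type*}
    [AddCommGroup E] [Module ℝ E] [TopologicalSpace E]
    [IsTopologicalAddGroup E] [ContinuousSMul ℝ E]
    [AddCommGroup F] [Module ℝ F] [TopologicalSpace F]
    [IsTopologicalAddGroup F] [ContinuousSMul ℝ F] [T2Space F]
    (Y : Set E) (hY : Y.Nonempty)
    (n : ℕ) (a : Fin n → F) (ha : AffineIndependent ℝ a)
    (K : Set F) (hK : K = convexHull ℝ (Set.range a))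
    (T : F → Set E) (hTY : ∀ x ∈ K, T x ⊆ Y)
    (hT : IsWNQ K T) :
    ∃ f : F → E, ContinuousOn f K ∧ ∀ x ∈ K, f x ∈ T x :=
  selection_theorem_of_WNQ_general n a ha K hK T hT
end

section
/- Let X be a nonempty convex subset of a topological vector space E and Y a nonempty subset of a topological vector space F. If a correspondence T : X → 2^Y has nonempty values and convex graph, then T is weakly naturally quasi-concave. -/
theorem sum_smul_mem_of_convex_graph {E F ι : Type*} [AddCommGroup E] [Module ℝ E]
    [AddCommGroup F] [Module ℝ F] {X : Set E} {T : E → Set F}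
    (hgraph : Convex ℝ {p : E × F | p.1 ∈ X ∧ p.2 ∈ T p.1})
    {s : Finset ι} {w : ι → ℝ} {x : ι → E} {y : ι → F}
    (hw₀ : ∀ i ∈ s, 0 ≤ w i) (hw₁ : ∑ i ∈ s, w i = 1)
    (hx : ∀ i ∈ s, x i ∈ X) (hy : ∀ i ∈ s, y i ∈ T (x i)) :
    ∑ i ∈ s, w i • y i ∈ T (∑ i ∈ s, w i • x i) := by
  have hmem := hgraph.sum_mem hw₀ hw₁ (z := fun i => (x i, y i)) fun i hi => ⟨hx i hi, hy i hi⟩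
  simpa only [Prod.fst_sum, Prod.snd_sum, Prod.smul_fst, Prod.smul_snd] using hmem.2

theorem isWNQ_of_convex_graph_general
    {E F : Type*}
    [AddCommGroup E] [Module ℝ E]
    [AddCommGroup F] [Module ℝ F]
    (X : Set E)
    (T : E → Set F)
    (hTne : ∀ x ∈ X, (T x).Nonempty)
    (hgraph : Convex ℝ {p : E × F | p.1 ∈ X ∧ p.2 ∈ T p.1}) :
    IsWNQ X T := by
  intro n x hx
  choose y hy using fun i => hTne (x i) (hx i)
  refine ⟨y, fun _ => id, hy, fun _ => continuous_id, fun _ => rfl, fun _ => rfl,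
    fun lam hlam => ⟨hlam, ?_⟩⟩
  exact sum_smul_mem_of_convex_graph hgraph (fun i _ => hlam.1 i) hlam.2
    (fun i _ => hx i) fun i _ => hy i

/-- A correspondence `T : X → 2^Y` with nonempty values and convex graph
`Gr(T) = {(x, y) : x ∈ X, y ∈ T x}` is weakly naturally quasi-concave. -/
theorem isWNQ_of_convex_graph
    {E F : Type*}
    [AddCommGroup E] [Module ℝ E] [TopologicalSpace E]
    [IsTopologicalAddGroup E] [ContinuousSMul ℝ E]
    [AddCommGroup F] [Module ℝ F] [TopologicalSpace F]
    [IsTopologicalAddGroup F] [ContinuousSMul ℝ F]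
    (X : Set E) (hXne : X.Nonempty) (hXconv : Convex ℝ X)
    (Y : Set F) (hYne : Y.Nonempty)
    (T : E → Set F) (hTY : ∀ x ∈ X, T x ⊆ Y)
    (hTne : ∀ x ∈ X, (T x).Nonempty)
    (hgraph : Convex ℝ {p : E × F | p.1 ∈ X ∧ p.2 ∈ T p.1}) :
    IsWNQ X T :=
  isWNQ_of_convex_graph_general X T hTne hgraph
end

section
/- The correspondence T : [0,4] → 2^{[-2,2]} defined by T(x) = [0,2] if x ∈ [0,2), T(2) = [-2,0], and T(x) = (0,2] if x ∈ (2,4], does not have weakly convex graph; in particular, for x_1 = 1 and x_2 = 3, for every y_1 ∈ T(x_1) and y_2 ∈ T(x_2) the segment co{(1,y_1),(3,y_2)} is not contained in Gr(T). -/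
/-- A correspondence `T : X → 2^Y` has *weakly convex graph* (WCG) if for each finite family
`x_1, ..., x_n` in `X` there exist `y_i ∈ T(x_i)` such that
`∑ i, λ_i • y_i ∈ T (∑ i, λ_i • x_i)` for every `(λ_1, ..., λ_n) ∈ Δ_{n-1}`. -/
def HasWeaklyConvexGraph {E F : Type*} [AddCommMonoid E] [Module ℝ E]
    [AddCommMonoid F] [Module ℝ F] (X : Set E) (T : E → Set F) : Prop :=
  ∀ (n : ℕ) (x : Fin n → E), (∀ i, x i ∈ X) →
    ∃ y : Fin n → F,
      (∀ i, y i ∈ T (x i)) ∧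
      ∀ lam ∈ stdSimplex ℝ (Fin n), ∑ i, lam i • y i ∈ T (∑ i, lam i • x i)

/-- The correspondence `T : [0,4] → 2^{[-2,2]}` with `T x = [0,2]` for `x ∈ [0,2)`,
`T 2 = [-2,0]` and `T x = (0,2]` for `x ∈ (2,4]` does not have weakly convex graph;
in particular, for `x₁ = 1`, `x₂ = 3` and any `y₁ ∈ T 1`, `y₂ ∈ T 3`, the segment
`co {(1,y₁), (3,y₂)}` is not contained in `Gr T`. -/
theorem example_correspondence_not_WCG
    (T : ℝ → Set ℝ)
    (hT₁ : ∀ x ∈ Set.Ico (0 : ℝ) 2, T x = Set.Icc 0 2)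
    (hT₂ : T 2 = Set.Icc (-2) 0)
    (hT₃ : ∀ x ∈ Set.Ioc (2 : ℝ) 4, T x = Set.Ioc 0 2) :
    ¬ HasWeaklyConvexGraph (Set.Icc (0 : ℝ) 4) T ∧
    ∀ y₁ ∈ T 1, ∀ y₂ ∈ T 3,
      ¬ (segment ℝ ((1 : ℝ), y₁) ((3 : ℝ), y₂) ⊆
          {p : ℝ × ℝ | p.1 ∈ Set.Icc (0 : ℝ) 4 ∧ p.2 ∈ T p.1}) := by
  have h1 : T 1 = Set.Icc 0 2 := hT₁ 1 (by norm_num)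
  have h3 : T 3 = Set.Ioc 0 2 := hT₃ 3 (by norm_num)
  have key : ∀ y₁ ∈ T 1, ∀ y₂ ∈ T 3, (1/2 : ℝ) * y₁ + (1/2 : ℝ) * y₂ ∉ T 2 := by
    intro y₁ hy₁ y₂ hy₂
    rw [h1] at hy₁; rw [h3] at hy₂; rw [hT₂]
    intro hmem
    have := hmem.2
    nlinarith [hy₁.1, hy₂.1]
  constructor
  · intro h
    obtain ⟨y, hy, hsum⟩ := h 2 ![1, 3] (by
      intro i; fin_cases i <;> constructor <;> norm_num)
    have hstd : ![(1/2 : ℝ), 1/2] ∈ stdSimplex ℝ (Fin 2) := by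
      constructor
      · intro i; fin_cases i <;> norm_num
      · norm_num [Fin.sum_univ_two]
    have := hsum ![(1/2 : ℝ), 1/2] hstd
    rw [Fin.sum_univ_two, Fin.sum_univ_two] at this
    simp only [Matrix.cons_val_zero, Matrix.cons_val_one, Matrix.head_cons,
      smul_eq_mul] at this
    norm_num at this
    exact key (y 0) (hy 0) (y 1) (hy 1) (by convert this using 2 <;> ring)
  · intro y₁ hy₁ y₂ hy₂ hsub
    have hmid : ((2 : ℝ), (1/2 : ℝ) * y₁ + (1/2 : ℝ) * y₂) ∈
        segment ℝ ((1 : ℝ), y₁) ((3 : ℝ), y₂) := by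
      refine ⟨1/2, 1/2, by norm_num, by norm_num, by norm_num, ?_⟩
      simp only [Prod.ext_iff, Prod.smul_mk, Prod.mk_add_mk, smul_eq_mul]
      constructor <;> norm_num <;> ring
    have := (hsub hmid).2
    exact key y₁ hy₁ y₂ hy₂ this
end
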